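/- arXiv:2004.13465 — 2 statements merged into one kernel-verified Lean document; each statement's English description precedes it below -/
import Mathlib

section
/- Let r_1,...,r_n be independent real random variables with E[|r_i|^{1+ε}] ≤ v for some ε ∈ (0,1], let β_1,...,β_n ∈ ℝ and h = (Σ_i |β_i|^{1+ε})^{1/(1+ε)}. Then Σ_i E[(β_i r_i · 1_{|β_i r_i| ≤ h})²] ≤ h² v. -/
/-!
On the event `|x| ≤ h` one has `x² = |x|^p |x|^(2-p) ≤ |x|^p h^(2-p)` for `p ≤ 2`, so the truncated
second moment of `X` is at most `h^(2-p) E|X|^p`. With `p = 1 + ε` and `X = βᵢ rᵢ` this gives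
`h^(1-ε) |βᵢ|^(1+ε) v` for each summand, and summing uses `h^(1+ε) = ∑ |βᵢ|^(1+ε)`.
-/

open MeasureTheory ProbabilityTheory

lemma Real.rpow_two_sub_mul_rpow {h : ℝ} (hh : 0 ≤ h) (p : ℝ) : h ^ (2 - p) * h ^ p = h ^ 2 := by
  rw [← Real.rpow_add' hh (by norm_num), sub_add_cancel, Real.rpow_two]

lemma sq_ite_abs_le_le_rpow_mul {x h p : ℝ} (hp : p ≤ 2) (hh : 0 ≤ h) :
    (if |x| ≤ h then x else 0) ^ 2 ≤ h ^ (2 - p) * |x| ^ p := by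
  split_ifs with hx
  · calc x ^ 2 = |x| ^ (2 - p) * |x| ^ p := by
          rw [Real.rpow_two_sub_mul_rpow (abs_nonneg x), sq_abs]
      _ ≤ h ^ (2 - p) * |x| ^ p := by gcongr
  · rw [zero_pow two_ne_zero]
    positivity

lemma integral_sq_truncation_le {Ω : Type*} [MeasurableSpace Ω] {μ : Measure Ω} {X : Ω → ℝ}
    {h p : ℝ} (hp : p ≤ 2) (hh : 0 ≤ h) (hX : Integrable (fun ω => |X ω| ^ p) μ) :
    ∫ ω, (if |X ω| ≤ h then X ω else 0) ^ 2 ∂μ ≤ h ^ (2 - p) * ∫ ω, |X ω| ^ p ∂μ := by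
  rw [← integral_const_mul]
  exact integral_mono_of_nonneg (.of_forall fun _ => sq_nonneg _) (hX.const_mul _)
    (.of_forall fun _ => sq_ite_abs_le_le_rpow_mul hp hh)

theorem stmt_6_general {Ω : Type*} [MeasurableSpace Ω] (μ : Measure Ω)
    (n : ℕ) (r : Fin n → Ω → ℝ) (ε v : ℝ) (hε : 0 < ε) (hε1 : ε ≤ 1)
    (hmom : ∀ i, ∫ ω, |r i ω| ^ (1 + ε) ∂μ ≤ v)
    (hmomInt : ∀ i, Integrable (fun ω => |r i ω| ^ (1 + ε)) μ)
    (β : Fin n → ℝ) (h : ℝ) (hh : h = (∑ i, |β i| ^ (1 + ε)) ^ (1 / (1 + ε))) :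
    ∑ i, ∫ ω, (if |β i * r i ω| ≤ h then β i * r i ω else 0) ^ 2 ∂μ ≤ h ^ 2 * v := by
  have hS : 0 ≤ ∑ i, |β i| ^ (1 + ε) := by positivity
  have hh0 : 0 ≤ h := hh ▸ Real.rpow_nonneg hS _
  have hpow : ∑ i, |β i| ^ (1 + ε) = h ^ (1 + ε) := by
    rw [hh, one_div, Real.rpow_inv_rpow hS (by linarith)]
  have habs_mul : ∀ i ω, |β i * r i ω| ^ (1 + ε) = |β i| ^ (1 + ε) * |r i ω| ^ (1 + ε) :=
    fun i ω => by rw [abs_mul, Real.mul_rpow (abs_nonneg _) (abs_nonneg _)]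
  calc ∑ i, ∫ ω, (if |β i * r i ω| ≤ h then β i * r i ω else 0) ^ 2 ∂μ
      ≤ ∑ i, h ^ (2 - (1 + ε)) * (|β i| ^ (1 + ε) * v) := by
        gcongr with i
        refine (integral_sq_truncation_le (p := 1 + ε) (by linarith) hh0 ?_).trans ?_
        · simpa only [habs_mul] using (hmomInt i).const_mul (|β i| ^ (1 + ε))
        · simp only [habs_mul, integral_const_mul]
          gcongr
          exact hmom i
    _ = h ^ (2 - (1 + ε)) * h ^ (1 + ε) * v := by
        rw [← Finset.mul_sum, ← Finset.sum_mul, hpow, mul_assoc]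
    _ = h ^ 2 * v := by rw [Real.rpow_two_sub_mul_rpow hh0]

theorem stmt_6 {Ω : Type*} [MeasurableSpace Ω] (μ : Measure Ω) [IsProbabilityMeasure μ]
    (n : ℕ) (r : Fin n → Ω → ℝ) (ε v : ℝ) (hε : 0 < ε) (hε1 : ε ≤ 1) (hv : 0 < v)
    (hindep : iIndepFun r μ)
    (hmom : ∀ i, ∫ ω, |r i ω| ^ (1 + ε) ∂μ ≤ v)
    (hmomInt : ∀ i, Integrable (fun ω => |r i ω| ^ (1 + ε)) μ)
    (β : Fin n → ℝ) (h : ℝ) (hh : h = (∑ i, |β i| ^ (1 + ε)) ^ (1 / (1 + ε))) :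
    ∑ i, ∫ ω, (if |β i * r i ω| ≤ h then β i * r i ω else 0) ^ 2 ∂μ ≤ h ^ 2 * v :=
  stmt_6_general μ n r ε v hε hε1 hmom hmomInt β h hh
end

section
/- Let γ = (K/(T+2K))^{1/(1+ε)} with T ≥ K ≥ 4 and ε ∈ (0,1]. Then T·γ^ε·(1 − 1/K − (√(ln 2)/2)·√((T/K)·γ^{1+ε}/(1 − 2γ^{1+ε}))) ≥ (1/8)·T^{1/(1+ε)}·K^{ε/(1+ε)}. -/
/-!
Since `γ ^ (1 + ε) = K / (T + 2K)`, the argument of the inner square root is exactly `1`.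
Writing `e = ε / (1 + ε)`, one has `T γ ^ ε = T ^ (1 / (1 + ε)) K ^ e (T / (T + 2K)) ^ e`.
As `T ≥ K` and `e ≤ 1/2`, the last factor is at least `(1/3) ^ (1/2) ≥ 3/8`, while for `K ≥ 4`
the bracket is at least `3/4 - √(log 2) / 2 ≥ 1/3`; and `3/8 · 1/3 = 1/8`.
-/

open Real

lemma sqrt_log_two_lt_five_sixths : √(log 2) < 5 / 6 := by
  rw [sqrt_lt' (by norm_num)]
  linarith [log_two_lt_d9]

lemma one_third_le_one_sub_inv_sub_sqrt_log_two {K : ℝ} (hK : 4 ≤ K) :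
    1 / 3 ≤ 1 - 1 / K - √(log 2) / 2 := by
  have hinv : 1 / K ≤ 1 / 4 := one_div_le_one_div_of_le (by norm_num) hK
  linarith [sqrt_log_two_lt_five_sixths]

lemma three_eighths_le_rpow {x e : ℝ} (hx : 1 / 3 ≤ x) (he₀ : 0 ≤ e) (he : e ≤ 1 / 2) :
    3 / 8 ≤ x ^ e := by
  have hsqrt : 3 / 8 ≤ (1 / 3 : ℝ) ^ (1 / 2 : ℝ) := by
    rw [← sqrt_eq_rpow, le_sqrt (by norm_num) (by norm_num)]
    norm_num
  calc (3 / 8 : ℝ) ≤ (1 / 3) ^ (1 / 2 : ℝ) := hsqrt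
    _ ≤ (1 / 3) ^ e := rpow_le_rpow_of_exponent_ge (by norm_num) (by norm_num) he
    _ ≤ x ^ e := rpow_le_rpow (by norm_num) hx he₀

lemma mul_div_rpow_eq_rpow_mul_rpow {T K a b : ℝ} (hT : 0 < T) (hK : 0 ≤ K) (hab : a + b = 1) :
    T * (K / T) ^ b = T ^ a * K ^ b := by
  rw [div_rpow hK hT.le, eq_sub_of_add_eq hab, rpow_sub hT, rpow_one]
  field_simp

lemma div_mul_div_one_sub_two_mul_eq_one {T K : ℝ} (hT : 0 < T) (hK : 0 < K) :
    T / K * (K / (T + 2 * K)) / (1 - 2 * (K / (T + 2 * K))) = 1 := by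
  have hD : T + 2 * K ≠ 0 := by positivity
  have hsub : 1 - 2 * (K / (T + 2 * K)) = T / (T + 2 * K) := by
    field_simp
    ring
  rw [hsub]
  field_simp

theorem stmt_16 (T K ε γ : ℝ) (hK : 4 ≤ K) (hTK : K ≤ T)
    (hε : 0 < ε) (hε1 : ε ≤ 1)
    (hγ : γ = (K / (T + 2 * K)) ^ (1 / (1 + ε))) :
    (1 / 8) * T ^ (1 / (1 + ε)) * K ^ (ε / (1 + ε)) ≤
      T * γ ^ ε * (1 - 1 / K -
        (Real.sqrt (Real.log 2) / 2) *
          Real.sqrt ((T / K) * γ ^ (1 + ε) / (1 - 2 * γ ^ (1 + ε)))) := by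
  have hK₀ : 0 < K := by linarith
  have hT₀ : 0 < T := by linarith
  have hp : 0 < 1 + ε := by linarith
  set e := ε / (1 + ε) with he
  have hγ_pow : γ ^ (1 + ε) = K / (T + 2 * K) := by
    rw [hγ, one_div, rpow_inv_rpow (by positivity) hp.ne']
  have hγ_rpow : γ ^ ε = (T / (T + 2 * K)) ^ e * (K / T) ^ e := by
    rw [← mul_rpow (by positivity) (by positivity), hγ, ← rpow_mul (by positivity),
      one_div_mul_eq_div]
    congr 1
    field_simp
  have hsplit : T * (K / T) ^ e = T ^ (1 / (1 + ε)) * K ^ e :=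
    mul_div_rpow_eq_rpow_mul_rpow hT₀ hK₀.le (by rw [he]; field_simp)
  have hratio : 3 / 8 ≤ (T / (T + 2 * K)) ^ e :=
    three_eighths_le_rpow (by rw [le_div_iff₀ (by positivity)]; linarith) (by positivity)
      (by rw [he, div_le_iff₀ hp]; linarith)
  rw [hγ_pow, div_mul_div_one_sub_two_mul_eq_one hT₀ hK₀, sqrt_one, mul_one, hγ_rpow]
  calc 1 / 8 * T ^ (1 / (1 + ε)) * K ^ e = T * (K / T) ^ e * (3 / 8 * (1 / 3)) := by
        rw [hsplit]; ring
    _ ≤ T * (K / T) ^ e * ((T / (T + 2 * K)) ^ e * (1 - 1 / K - √(log 2) / 2)) := by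
        gcongr
        exact one_third_le_one_sub_inv_sub_sqrt_log_two hK
    _ = _ := by ring
end
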